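/- Let H be a monoid such that the reduced quotient H_red = H/H^× is finitely generated. Then R̄(H) = {ρ(a) : a a nonunit of H with the property that ρ(a^t) = ρ(a) for all t ∈ ℕ}. -/

import Mathlib

open Filter Topology

/-- The set of factorization lengths of `a`: the set of all `k` such that `a` is a
product of `k` atoms (irreducibles); by convention it is `{0}` for units. -/
noncomputable def lengthSet (H : Type*) [CommMonoid H] (a : H) : Set ℕ :=
  open Classical in
  if IsUnit a then {0}
  else {k | ∃ f : Fin k → H, (∀ i, Irreducible (f i)) ∧ a = ∏ i, f i}

/-- The elasticity `ρ(a) = max L(a) / min L(a)` of an element of a BF-monoid,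
with `ρ(a) = 1` for units. -/
noncomputable def elasticity (H : Type*) [CommMonoid H] (a : H) : ℝ :=
  open Classical in
  if IsUnit a then 1
  else ((sSup (lengthSet H a) : ℕ) : ℝ) / ((sInf (lengthSet H a) : ℕ) : ℝ)

/-- The elasticity `ρ(H) = sup {ρ(a) : a ∈ H} ∈ ℝ≥1 ∪ {∞}` of the monoid `H`. -/
noncomputable def monoidElasticity (H : Type*) [CommMonoid H] : EReal :=
  ⨆ a : H, ((elasticity H a : ℝ) : EReal)

/-- The set `R̄(H)` of asymptotic elasticities `ρ̄(a) = lim_{n → ∞} ρ(aⁿ)`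
of nonunits `a ∈ H` (membership requires the limit to exist). -/
def asympSet (H : Type*) [CommMonoid H] : Set EReal :=
  {r | ∃ a : H, ¬ IsUnit a ∧
    Tendsto (fun n : ℕ => ((elasticity H (a ^ n) : ℝ) : EReal)) atTop (nhds r)}

/-- `H` is locally finitely generated: for every `a ∈ H` there are only finitely many
atoms, up to associates, dividing some power of `a`. -/
def LocallyFinitelyGenerated (H : Type*) [CommMonoid H] : Prop :=
  ∀ a : H, {u : Associates H | Irreducible u ∧ ∃ n : ℕ, u ∣ Associates.mk (a ^ n)}.Finite

/-- `H` is a BF-monoid: atomic (every nonunit has a factorization into atoms) and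
all sets of lengths are finite. -/
def IsBFMonoid (H : Type*) [CommMonoid H] : Prop :=
  (∀ a : H, ¬ IsUnit a → (lengthSet H a).Nonempty) ∧ ∀ a : H, (lengthSet H a).Finite

/-- `(k, ℓ) ≠ (0,0)` is a nice pair with respect to `(a, b)` if
`max L((aᵏbˡ)ᵗ) = t · max L(aᵏbˡ)` and `min L((aᵏbˡ)ᵗ) = t · min L(aᵏbˡ)` for all `t ∈ ℕ`. -/
def IsNicePair (H : Type*) [CommMonoid H] (a b : H) (k ℓ : ℕ) : Prop :=
  ¬ (k = 0 ∧ ℓ = 0) ∧ ∀ t : ℕ, 0 < t →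
    sSup (lengthSet H ((a ^ k * b ^ ℓ) ^ t)) = t * sSup (lengthSet H (a ^ k * b ^ ℓ)) ∧
    sInf (lengthSet H ((a ^ k * b ^ ℓ) ^ t)) = t * sInf (lengthSet H (a ^ k * b ^ ℓ))

/-- `H` is strongly primary: `H ≠ H^×` and for every nonunit `a` there is `n ∈ ℕ`
such that every product of `n` nonunits of `H` is divisible by `a`. -/
def StronglyPrimary (H : Type*) [CommMonoid H] : Prop :=
  (∃ a : H, ¬ IsUnit a) ∧ ∀ a : H, ¬ IsUnit a → ∃ n : ℕ, 0 < n ∧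
    ∀ f : Fin n → H, (∀ i, ¬ IsUnit (f i)) → a ∣ ∏ i, f i

/-- `H` is half-factorial: atomic and `|L(a)| = 1` for every `a ∈ H`. -/
def IsHalfFactorial (H : Type*) [CommMonoid H] : Prop :=
  ∀ a : H, ∃ k : ℕ, lengthSet H a = {k}

/-!
The atoms of `H_red` are finitely many and generate it, so a factorization of `aⁿ` is a multiset
of atoms. The triples `(n, x, y)` in which `x` and `y` are factorizations of `aⁿ` form a subset of
`ℕ × ℕ^A × ℕ^A` (`A` the set of atoms) that is closed under subtraction; by Dickson's lemma it has
finitely many minimal nonzero elements, and every triple is a sum of them. For a minimal triple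
`(n₀, x₀, y₀)` with the largest ratio `|x₀| / |y₀|`, the mediant inequality gives
`ρ(aⁿ) ≤ |x₀| / |y₀| ≤ ρ(a^n₀)` for every `n`, while `ρ(a^n₀) ≤ ρ(a^(n₀ t))` holds in any
BF-monoid. Hence `ρ(a^(n₀ t)) = ρ(a^n₀)` for all `t`, and this common value is `ρ̄(a)`.
-/

instance {H : Type*} [CancelCommMonoid H] : CancelCommMonoid (Associates H) where
  mul_left_cancel a b c h := by
    obtain ⟨a, rfl⟩ := Associates.mk_surjective a
    obtain ⟨b, rfl⟩ := Associates.mk_surjective b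
    obtain ⟨c, rfl⟩ := Associates.mk_surjective c
    simp only [Associates.mk_mul_mk, Associates.mk_eq_mk_iff_associated] at h ⊢
    obtain ⟨u, hu⟩ := h
    exact ⟨u, mul_left_cancel (a := a) (by rw [← hu, mul_assoc])⟩

theorem Associates.irreducible_mk_iff {M : Type*} [CommMonoid M] {a : M} :
    Irreducible (Associates.mk a) ↔ Irreducible a := by
  refine ⟨fun h => ⟨fun hu => h.not_isUnit (isUnit_mk.2 hu), fun b c hbc => ?_⟩,
    fun h => ⟨fun hu => h.not_isUnit (isUnit_mk.1 hu), fun b c hbc => ?_⟩⟩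
  · exact (h.isUnit_or_isUnit (by rw [hbc, mk_mul_mk])).imp isUnit_mk.1 isUnit_mk.1
  · obtain ⟨b, rfl⟩ := mk_surjective b
    obtain ⟨c, rfl⟩ := mk_surjective c
    obtain ⟨u, rfl⟩ := mk_eq_mk_iff_associated.1 (hbc.trans mk_mul_mk).symm
    exact (((irreducible_mul_isUnit u.isUnit).1 h).isUnit_or_isUnit rfl).imp isUnit_mk.2 isUnit_mk.2

section MinimalElements

variable {α : Type*} [AddCommMonoid α] [PartialOrder α] [CanonicallyOrderedAdd α] [Sub α]
  [OrderedSub α] [IsCancelAdd α]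

theorem subset_closure_setOf_minimal [WellFoundedLT α] {S : Set α}
    (hS : ∀ v ∈ S, ∀ w ∈ S, w ≤ v → v - w ∈ S) :
    S ⊆ AddSubmonoid.closure {g | Minimal (fun x => x ∈ S ∧ x ≠ 0) g} := by
  intro v hv
  induction v using WellFoundedLT.induction with
  | _ v ih =>
    rcases eq_or_ne v 0 with rfl | hv0
    · exact zero_mem _
    obtain ⟨g, hgv, hg⟩ :=
      exists_minimal_le_of_wellFoundedLT (fun x => (x ∈ S ∧ x ≠ 0) ∧ x ≤ v) v ⟨⟨hv, hv0⟩, le_rfl⟩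
    have hg_min : Minimal (fun x => x ∈ S ∧ x ≠ 0) g :=
      ⟨hg.prop.1, fun y hy hyg => hg.2 ⟨hy, hyg.trans hgv⟩ hyg⟩
    have hsplit : g + (v - g) = v := add_tsub_cancel_of_le hgv
    have hlt : v - g < v := by
      refine tsub_le_self.lt_of_ne fun h => hg.prop.1.2 ?_
      rw [h] at hsplit
      exact add_eq_right.1 hsplit
    rw [← hsplit]
    exact add_mem (AddSubmonoid.subset_closure hg_min) (ih _ hlt (hS v hv g hg.prop.1.1 hgv))

end MinimalElements

instance Multiset.wellQuasiOrderedLE {ι : Type*} [Finite ι] : WellQuasiOrderedLE (Multiset ι) := by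
  classical
  exact Finsupp.orderIsoMultiset.wellQuasiOrderedLE_iff.1 inferInstance

section Atoms

variable {M : Type*} [CommMonoid M]

theorem eq_zero_of_prod_map_val_eq_one {m : Multiset {u : M // Irreducible u}}
    (h : (m.map Subtype.val).prod = 1) : m = 0 := by
  by_contra hm
  obtain ⟨u, hu⟩ := Multiset.exists_mem_of_ne_zero hm
  exact u.2.not_isUnit (isUnit_of_dvd_one (h ▸ Multiset.dvd_prod (Multiset.mem_map_of_mem _ hu)))

theorem mem_of_irreducible_of_closure_eq_top [Subsingleton Mˣ] {S : Set M}
    (hS : Submonoid.closure S = ⊤) (hS_irr : ∀ s ∈ S, Irreducible s) {u : M}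
    (hu : Irreducible u) : u ∈ S := by
  obtain ⟨m, hm, rfl⟩ := Submonoid.exists_multiset_of_mem_closure (hS ▸ Submonoid.mem_top u)
  have hm0 : m ≠ 0 := by
    rintro rfl
    exact hu.not_isUnit (by simp)
  obtain ⟨s, hs⟩ := Multiset.exists_mem_of_ne_zero hm0
  obtain ⟨m', rfl⟩ := Multiset.exists_cons_of_mem hs
  rw [Multiset.prod_cons] at hu ⊢
  rcases hu.isUnit_or_isUnit rfl with h | h
  · exact absurd h (hS_irr s (hm s hs)).not_isUnit
  · rw [isUnit_iff_eq_one.1 h, mul_one]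
    exact hm s hs

end Atoms

section Cancellative

variable {M : Type*} [CancelCommMonoid M]

theorem finite_setOf_prod_map_val_eq [Finite {u : M // Irreducible u}] (z : M) :
    {m : Multiset {u : M // Irreducible u} | (m.map Subtype.val).prod = z}.Finite := by
  refine WellQuasiOrderedLE.finite_of_isAntichain fun m hm m' hm' hne hle => hne ?_
  obtain ⟨d, rfl⟩ := exists_add_of_le hle
  simp only [Set.mem_ofPred_eq, Multiset.map_add, Multiset.prod_add] at hm hm'
  rw [← hm', eq_comm, mul_eq_left] at hm
  rw [eq_zero_of_prod_map_val_eq_one hm, add_zero]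

variable [Subsingleton Mˣ]

theorem irreducible_of_mem_minimal_generating {S : Set M} (hS : Submonoid.closure S = ⊤)
    (hmin : ∀ s ∈ S, Submonoid.closure (S \ {s}) ≠ ⊤) {s : M} (hs : s ∈ S) : Irreducible s := by
  have hs_not_mem : s ∉ Submonoid.closure (S \ {s}) := by
    intro h
    refine hmin s hs (top_le_iff.1 (hS ▸ Submonoid.closure_le.2 fun x hx => ?_))
    rcases eq_or_ne x s with rfl | hne
    · exact h
    · exact Submonoid.subset_closure ⟨hx, hne⟩
  refine ⟨fun hu => hs_not_mem (isUnit_iff_eq_one.1 hu ▸ one_mem _), fun b c hbc => ?_⟩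
  obtain ⟨mb, hmb, rfl⟩ := Submonoid.exists_multiset_of_mem_closure (hS ▸ Submonoid.mem_top b)
  obtain ⟨mc, hmc, rfl⟩ := Submonoid.exists_multiset_of_mem_closure (hS ▸ Submonoid.mem_top c)
  by_cases hsb : s ∈ mb
  · obtain ⟨mb', rfl⟩ := Multiset.exists_cons_of_mem hsb
    refine Or.inr (IsUnit.of_mul_eq_one_right mb'.prod (mul_left_cancel (a := s) ?_))
    rw [Multiset.prod_cons] at hbc
    rw [← mul_assoc, ← hbc, mul_one]
  by_cases hsc : s ∈ mc
  · obtain ⟨mc', rfl⟩ := Multiset.exists_cons_of_mem hsc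
    refine Or.inl (IsUnit.of_mul_eq_one mc'.prod (mul_left_cancel (a := s) ?_))
    rw [Multiset.prod_cons] at hbc
    rw [mul_left_comm, ← hbc, mul_one]
  have hbc_mem : mb.prod * mc.prod ∈ Submonoid.closure (S \ {s}) :=
    mul_mem (Submonoid.multiset_prod_mem _ _ fun x hx =>
        Submonoid.subset_closure ⟨hmb x hx, fun h => hsb (h ▸ hx)⟩)
      (Submonoid.multiset_prod_mem _ _ fun x hx =>
        Submonoid.subset_closure ⟨hmc x hx, fun h => hsc (h ▸ hx)⟩)
  rw [← hbc] at hbc_mem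
  exact absurd hbc_mem hs_not_mem

theorem Monoid.FG.exists_finset_irreducible (h : Monoid.FG M) :
    ∃ S : Finset M, (∀ s ∈ S, Irreducible s) ∧ Submonoid.closure (S : Set M) = ⊤ := by
  classical
  have hex : ∃ n, ∃ S : Finset M, S.card = n ∧ Submonoid.closure (S : Set M) = ⊤ :=
    let ⟨S, hS⟩ := Monoid.fg_def.1 h; ⟨_, S, rfl, hS⟩
  obtain ⟨S, hcard, hS⟩ := Nat.find_spec hex
  refine ⟨S, fun s hs => irreducible_of_mem_minimal_generating hS (fun s hs hs' => ?_) hs, hS⟩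
  refine Nat.find_min hex (m := (S.erase s).card) ?_ ⟨S.erase s, rfl, by rwa [Finset.coe_erase]⟩
  exact hcard ▸ Finset.card_erase_lt_of_mem hs

theorem Monoid.FG.finite_irreducible (h : Monoid.FG M) : Finite {u : M // Irreducible u} := by
  obtain ⟨S, hS_irr, hS⟩ := h.exists_finset_irreducible
  exact (S.finite_toSet.subset fun _ hu =>
    mem_of_irreducible_of_closure_eq_top hS hS_irr hu).to_subtype

theorem Monoid.FG.exists_prod_irreducible_eq (h : Monoid.FG M) (z : M) :
    ∃ m : Multiset {u : M // Irreducible u}, (m.map Subtype.val).prod = z := by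
  obtain ⟨S, hS_irr, hS⟩ := h.exists_finset_irreducible
  obtain ⟨m, hm, rfl⟩ := Submonoid.exists_multiset_of_mem_closure (hS ▸ Submonoid.mem_top z)
  lift m to Multiset {u : M // Irreducible u} using fun x hx => hS_irr x (hm x hx)
  exact ⟨m, rfl⟩

end Cancellative

section FactorizationPairs

variable {M : Type*} [CancelCommMonoid M]

/-- The triples `(n, x, y)` in which `x` and `y` are factorizations of `zⁿ` into atoms. -/
def factorizationPairs (z : M) :
    Set (ℕ × Multiset {u : M // Irreducible u} × Multiset {u : M // Irreducible u}) :=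
  {v | (v.2.1.map Subtype.val).prod = z ^ v.1 ∧ (v.2.2.map Subtype.val).prod = z ^ v.1}

theorem sub_mem_factorizationPairs [DecidableEq M] {z : M} {v w} (hv : v ∈ factorizationPairs z)
    (hw : w ∈ factorizationPairs z) (hwv : w ≤ v) : v - w ∈ factorizationPairs z := by
  have hsub : ∀ {x x' : Multiset {u : M // Irreducible u}} {n n' : ℕ},
      (x.map Subtype.val).prod = z ^ n → (x'.map Subtype.val).prod = z ^ n' → x' ≤ x →
      n' ≤ n → ((x - x').map Subtype.val).prod = z ^ (n - n') := by
    intro x x' n n' hx hx' hle hn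
    refine mul_left_cancel (a := z ^ n') ?_
    rw [← pow_add, Nat.add_sub_cancel' hn, ← hx', ← Multiset.prod_add, ← Multiset.map_add,
      add_tsub_cancel_of_le hle, hx]
  exact ⟨hsub hv.1 hw.1 hwv.2.1 hwv.1, hsub hv.2 hw.2 hwv.2.2 hwv.1⟩

theorem factorizationPairs_pos {z : M} (hz : ¬IsUnit z) {v} (hv : v ∈ factorizationPairs z)
    (hv0 : v ≠ 0) : 0 < v.1 ∧ v.2.2 ≠ 0 := by
  obtain ⟨n, x, y⟩ := v
  obtain ⟨hx, hy⟩ := hv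
  dsimp only at hx hy
  have hn : n ≠ 0 := by
    rintro rfl
    rw [pow_zero] at hx hy
    rw [eq_zero_of_prod_map_val_eq_one hx, eq_zero_of_prod_map_val_eq_one hy] at hv0
    exact hv0 rfl
  refine ⟨Nat.pos_of_ne_zero hn, ?_⟩
  rintro rfl
  refine hz ((isUnit_pow_iff hn).1 ?_)
  rw [← hy]
  simp

theorem exists_factorizationPairs_max_ratio [Finite {u : M // Irreducible u}] {z : M}
    (hz : ¬IsUnit z) {x : Multiset {u : M // Irreducible u}} (hx : (x.map Subtype.val).prod = z) :
    ∃ g ∈ factorizationPairs z, g ≠ 0 ∧ ∀ v ∈ factorizationPairs z,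
      Multiset.card v.2.1 * Multiset.card g.2.2 ≤ Multiset.card g.2.1 * Multiset.card v.2.2 := by
  classical
  set A := {g | Minimal (fun v => v ∈ factorizationPairs z ∧ v ≠ 0) g}
  have hA_fin : A.Finite :=
    WellQuasiOrderedLE.finite_of_isAntichain (setOfPred_minimal_antichain _)
  have hA_ne : A.Nonempty := by
    obtain ⟨g, -, hg⟩ := exists_minimal_le_of_wellFoundedLT
      (fun v => v ∈ factorizationPairs z ∧ v ≠ 0) (1, x, x)
      ⟨⟨by simpa using hx, by simpa using hx⟩, by simp⟩
    exact ⟨g, hg⟩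
  have hpos : ∀ g ∈ A, (0 : ℝ) < Multiset.card g.2.2 := fun g hg => by
    exact_mod_cast Multiset.card_pos.2 (factorizationPairs_pos hz hg.1.1 hg.1.2).2
  obtain ⟨g, hgA, hg_max⟩ := Set.exists_max_image A
    (fun g => (Multiset.card g.2.1 : ℝ) / Multiset.card g.2.2) hA_fin hA_ne
  refine ⟨g, hgA.1.1, hgA.1.2, fun v hv => ?_⟩
  have hv_cl := subset_closure_setOf_minimal (fun _ hv _ hw => sub_mem_factorizationPairs hv hw) hv
  clear hv
  induction hv_cl using AddSubmonoid.closure_induction with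
  | mem g' hg' =>
    have h := hg_max g' hg'
    rw [div_le_div_iff₀ (hpos g' hg') (hpos g hgA)] at h
    exact_mod_cast h
  | zero => simp
  | add v w _ _ hv hw =>
    simp only [Prod.snd_add, Prod.fst_add, Multiset.card_add, add_mul, mul_add]
    exact add_le_add hv hw

end FactorizationPairs

section Lengths

variable {H : Type*} [CommMonoid H] {c : H} {k : ℕ}

theorem lengthSet_of_isUnit (hc : IsUnit c) : lengthSet H c = {0} := by
  rw [lengthSet, if_pos hc]

theorem mem_lengthSet_iff_multiset (hc : ¬IsUnit c) :
    k ∈ lengthSet H c ↔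
      ∃ m : Multiset H, (∀ x ∈ m, Irreducible x) ∧ Multiset.card m = k ∧ m.prod = c := by
  simp only [lengthSet, if_neg hc, Set.mem_ofPred_eq]
  constructor
  · rintro ⟨f, hf, rfl⟩
    refine ⟨Finset.univ.val.map f, fun x hx => ?_, by simp, rfl⟩
    obtain ⟨i, -, rfl⟩ := Multiset.mem_map.1 hx
    exact hf i
  · rintro ⟨m, hm, rfl, rfl⟩
    obtain ⟨l, rfl⟩ : ∃ l : List H, (l : Multiset H) = m := ⟨m.toList, m.coe_toList⟩
    refine ⟨l.get, fun i => hm _ (List.get_mem l i), ?_⟩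
    exact (congrArg List.prod (List.ofFn_get l)).symm.trans List.prod_ofFn

theorem mem_lengthSet_iff_atoms (hc : ¬IsUnit c) :
    k ∈ lengthSet H c ↔ ∃ m : Multiset {u : Associates H // Irreducible u},
      Multiset.card m = k ∧ (m.map Subtype.val).prod = Associates.mk c := by
  rw [mem_lengthSet_iff_multiset hc]
  constructor
  · rintro ⟨m, hm, rfl, rfl⟩
    have hirr : ∀ x ∈ m.map Associates.mk, Irreducible x := by
      simpa [Associates.irreducible_mk_iff] using hm
    lift m.map Associates.mk to Multiset {u : Associates H // Irreducible u} using hirr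
      with m' hm'
    refine ⟨m', ?_, by rw [hm', Associates.prod_mk]⟩
    rw [← Multiset.card_map Subtype.val, hm', Multiset.card_map]
  · rintro ⟨m, rfl, hm⟩
    obtain ⟨m₀, hm₀⟩ := Multiset.map_surjective_of_surjective Associates.mk_surjective
      (m.map Subtype.val)
    have hirr : ∀ x ∈ m₀, Irreducible x := fun x hx => by
      obtain ⟨u, -, hu⟩ := Multiset.mem_map.1 (hm₀ ▸ Multiset.mem_map_of_mem Associates.mk hx)
      exact Associates.irreducible_mk_iff.1 (hu ▸ u.2)
    have hcard : Multiset.card m₀ = Multiset.card m := by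
      rw [← Multiset.card_map Associates.mk, hm₀, Multiset.card_map]
    obtain ⟨u, hu⟩ : Associated m₀.prod c := by
      rw [← Associates.mk_eq_mk_iff_associated, ← Associates.prod_mk, hm₀, hm]
    obtain ⟨a, ha⟩ : ∃ a, a ∈ m₀ := Multiset.exists_mem_of_ne_zero fun h0 =>
      hc (by rw [← hu, h0]; simp)
    obtain ⟨m₁, rfl⟩ := Multiset.exists_cons_of_mem ha
    refine ⟨(a * u) ::ₘ m₁, fun x hx => ?_, by simpa using hcard, ?_⟩
    · rcases Multiset.mem_cons.1 hx with rfl | hx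
      · exact (associated_mul_unit_right a u u.isUnit).irreducible (hirr a ha)
      · exact hirr x (Multiset.mem_cons_of_mem hx)
    · rw [← hu, Multiset.prod_cons, Multiset.prod_cons, mul_right_comm]

theorem pos_of_mem_lengthSet (hc : ¬IsUnit c) (hk : k ∈ lengthSet H c) : 0 < k := by
  obtain ⟨m, -, rfl, rfl⟩ := (mem_lengthSet_iff_multiset hc).1 hk
  exact Multiset.card_pos.2 fun h0 => hc (by simp [h0])

theorem mul_mem_lengthSet_pow (hk : k ∈ lengthSet H c) (t : ℕ) : t * k ∈ lengthSet H (c ^ t) := by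
  by_cases hc : IsUnit c
  · rw [lengthSet_of_isUnit hc, Set.mem_singleton_iff] at hk
    rw [lengthSet_of_isUnit (hc.pow t), hk, mul_zero, Set.mem_singleton_iff]
  rcases Nat.eq_zero_or_pos t with rfl | ht
  · rw [pow_zero, lengthSet_of_isUnit isUnit_one, zero_mul, Set.mem_singleton_iff]
  have hct : ¬IsUnit (c ^ t) := (isUnit_pow_iff ht.ne').not.2 hc
  obtain ⟨m, hm, rfl, rfl⟩ := (mem_lengthSet_iff_multiset hc).1 hk
  exact (mem_lengthSet_iff_multiset hct).2 ⟨t • m, fun x hx => hm x (Multiset.mem_of_mem_nsmul hx),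
    Multiset.card_nsmul m t, Multiset.prod_nsmul m t⟩

theorem div_le_elasticity (hfin : (lengthSet H c).Finite) (hc : ¬IsUnit c) {k l : ℕ}
    (hk : k ∈ lengthSet H c) (hl : l ∈ lengthSet H c) : (k : ℝ) / l ≤ elasticity H c := by
  rw [elasticity, if_neg hc]
  have hinf_pos := pos_of_mem_lengthSet hc (Nat.sInf_mem ⟨l, hl⟩)
  exact div_le_div₀ (by positivity) (by exact_mod_cast le_csSup hfin.bddAbove hk)
    (by exact_mod_cast hinf_pos) (by exact_mod_cast Nat.sInf_le hl)

theorem IsBFMonoid.exists_elasticity_eq_div (hH : IsBFMonoid H) (hc : ¬IsUnit c) :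
    ∃ k ∈ lengthSet H c, ∃ l ∈ lengthSet H c, elasticity H c = k / l :=
  ⟨_, Nat.sSup_mem (hH.1 c hc) (hH.2 c).bddAbove, _, Nat.sInf_mem (hH.1 c hc),
    by rw [elasticity, if_neg hc]⟩

theorem IsBFMonoid.elasticity_le_elasticity_pow (hH : IsBFMonoid H) (hc : ¬IsUnit c) {t : ℕ}
    (ht : 0 < t) : elasticity H c ≤ elasticity H (c ^ t) := by
  obtain ⟨k, hk, l, hl, hρ⟩ := hH.exists_elasticity_eq_div hc
  have ht' : (t : ℝ) ≠ 0 := by positivity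
  calc elasticity H c = ((t * k : ℕ) : ℝ) / (t * l : ℕ) := by
        rw [hρ, Nat.cast_mul, Nat.cast_mul, mul_div_mul_left _ _ ht']
    _ ≤ elasticity H (c ^ t) :=
        div_le_elasticity (hH.2 _) ((isUnit_pow_iff ht.ne').not.2 hc)
          (mul_mem_lengthSet_pow hk t) (mul_mem_lengthSet_pow hl t)

theorem tendsto_elasticity_pow (h : ∀ t : ℕ, 0 < t → elasticity H (c ^ t) = elasticity H c) :
    Tendsto (fun n : ℕ => ((elasticity H (c ^ n) : ℝ) : EReal)) atTop
      (𝓝 ((elasticity H c : ℝ) : EReal)) :=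
  tendsto_const_nhds.congr' (eventually_atTop.2 ⟨1, fun n hn => by simp only [h n hn]⟩)

end Lengths

section FinitelyGenerated

variable {H : Type*} [CancelCommMonoid H]

theorem isBFMonoid_of_fg (hfg : Monoid.FG (Associates H)) : IsBFMonoid H := by
  have := hfg.finite_irreducible
  refine ⟨fun c hc => ?_, fun c => ?_⟩
  · obtain ⟨m, hm⟩ := hfg.exists_prod_irreducible_eq (Associates.mk c)
    exact ⟨_, (mem_lengthSet_iff_atoms hc).2 ⟨m, rfl, hm⟩⟩
  by_cases hc : IsUnit c
  · rw [lengthSet_of_isUnit hc]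
    exact Set.finite_singleton 0
  refine ((finite_setOf_prod_map_val_eq (Associates.mk c)).image Multiset.card).subset ?_
  intro k hk
  obtain ⟨m, rfl, hm⟩ := (mem_lengthSet_iff_atoms hc).1 hk
  exact ⟨m, hm, rfl⟩

theorem exists_elasticity_pow_le (hfg : Monoid.FG (Associates H)) {a : H} (ha : ¬IsUnit a) :
    ∃ n₀, 0 < n₀ ∧ ∀ n, 0 < n → elasticity H (a ^ n) ≤ elasticity H (a ^ n₀) := by
  have := hfg.finite_irreducible
  have hH := isBFMonoid_of_fg hfg
  have hz : ¬IsUnit (Associates.mk a) := Associates.isUnit_mk.not.2 ha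
  have hpow : ∀ n, 0 < n → ¬IsUnit (a ^ n) := fun n hn => (isUnit_pow_iff hn.ne').not.2 ha
  have hmem : ∀ {n} {x : Multiset {u : Associates H // Irreducible u}}, 0 < n →
      (x.map Subtype.val).prod = Associates.mk a ^ n → Multiset.card x ∈ lengthSet H (a ^ n) :=
    fun hn hx => (mem_lengthSet_iff_atoms (hpow _ hn)).2 ⟨_, rfl, by rw [hx, Associates.mk_pow]⟩
  obtain ⟨w, hw⟩ := hfg.exists_prod_irreducible_eq (Associates.mk a)
  obtain ⟨g, hg, hg0, hg_max⟩ := exists_factorizationPairs_max_ratio hz hw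
  obtain ⟨hg_pos, hg_y⟩ := factorizationPairs_pos hz hg hg0
  refine ⟨g.1, hg_pos, fun n hn => ?_⟩
  obtain ⟨k, hk, l, hl, hρ⟩ := hH.exists_elasticity_eq_div (hpow n hn)
  obtain ⟨x, rfl, hx⟩ := (mem_lengthSet_iff_atoms (hpow n hn)).1 hk
  obtain ⟨y, rfl, hy⟩ := (mem_lengthSet_iff_atoms (hpow n hn)).1 hl
  rw [Associates.mk_pow] at hx hy
  have hl_pos : (0 : ℝ) < Multiset.card y := by
    exact_mod_cast pos_of_mem_lengthSet (hpow n hn) hl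
  have hgy_pos : (0 : ℝ) < Multiset.card g.2.2 := by exact_mod_cast Multiset.card_pos.2 hg_y
  calc elasticity H (a ^ n) = (Multiset.card x : ℝ) / Multiset.card y := hρ
    _ ≤ (Multiset.card g.2.1 : ℝ) / Multiset.card g.2.2 := by
        rw [div_le_div_iff₀ hl_pos hgy_pos]
        exact_mod_cast hg_max (n, x, y) ⟨hx, hy⟩
    _ ≤ elasticity H (a ^ g.1) :=
        div_le_elasticity (hH.2 _) (hpow _ hg_pos) (hmem hg_pos hg.1) (hmem hg_pos hg.2)

end FinitelyGenerated

/-- If `H_red = H/H^×` is finitely generated, then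
`R̄(H) = {ρ(a) : a a nonunit of H with ρ(aᵗ) = ρ(a) for all t ∈ ℕ}`. -/
theorem statement8 (H : Type*) [CancelCommMonoid H]
    (hfg : Monoid.FG (Associates H)) :
    asympSet H = {r : EReal | ∃ a : H, ¬ IsUnit a ∧
      (∀ t : ℕ, 0 < t → elasticity H (a ^ t) = elasticity H a) ∧
      r = ((elasticity H a : ℝ) : EReal)} := by
  ext r
  constructor
  · rintro ⟨a, ha, hlim⟩
    obtain ⟨n₀, hn₀, hmax⟩ := exists_elasticity_pow_le hfg ha
    have ha₀ : ¬IsUnit (a ^ n₀) := (isUnit_pow_iff hn₀.ne').not.2 ha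
    have hstable : ∀ t, 0 < t → elasticity H ((a ^ n₀) ^ t) = elasticity H (a ^ n₀) :=
      fun t ht => le_antisymm (by simpa [← pow_mul] using hmax _ (Nat.mul_pos hn₀ ht))
        ((isBFMonoid_of_fg hfg).elasticity_le_elasticity_pow ha₀ ht)
    refine ⟨a ^ n₀, ha₀, hstable, tendsto_nhds_unique ?_ (tendsto_elasticity_pow hstable)⟩
    simpa only [Function.comp_def, id, ← pow_mul] using
      hlim.comp (tendsto_id.const_mul_atTop' hn₀)
  · rintro ⟨a, ha, hstable, rfl⟩
    exact ⟨a, ha, tendsto_elasticity_pow hstable⟩
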